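/- arXiv:math/0506025 — 4 statements merged into one kernel-verified Lean document; each statement's English description precedes it below -/
import Mathlib

section
/- Let A be an abelian group and X₁, X₂ finite nonempty subsets of A. If the sumset X₁ + X₂ does not contain any coset of a nontrivial subgroup of A, then |X₁ + X₂| ≥ |X₁| + |X₂| − 1. -/
open Pointwise

private lemma aux_stmt1 {A : Type*} [AddCommGroup A] [DecidableEq A] :
    ∀ n (X₁ X₂ : Finset A), X₂.card = n → X₁.Nonempty → X₂.Nonempty →
    (∀ (H : AddSubgroup A), H ≠ ⊥ → ∀ a : A, ∃ h ∈ H, a + h ∉ X₁ + X₂) →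
    X₁.card + X₂.card - 1 ≤ (X₁ + X₂).card := by
  intro n
  induction n using Nat.strong_induction_on with
  | _ n ih =>
  intro X₁ X₂ hn h₁ h₂ hcoset
  by_cases hcase : ∃ x₁ ∈ X₁, ∃ x₂ ∈ X₂, ∃ b ∈ X₂, b + (x₁ - x₂) ∉ X₁
  · -- e-transform case
    obtain ⟨x₁, hx₁, x₂, hx₂, b, hb, hbe⟩ := hcase
    set e := x₁ - x₂ with he
    set T : Finset A := X₂.image (· + e) with hT
    set A' : Finset A := X₁ ∪ T with hA'
    set B' : Finset A := X₂.filter (fun c => c + e ∈ X₁) with hB'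
    have hTcard : T.card = X₂.card := Finset.card_image_of_injective _ (add_left_injective e)
    have hB'card : B'.card = (X₁ ∩ T).card := by
      rw [← Finset.card_image_of_injective B' (add_left_injective e)]
      congr 1
      ext y
      simp only [Finset.mem_image, Finset.mem_filter, Finset.mem_inter, hB', hT]
      constructor
      · rintro ⟨c, ⟨hc, hcX⟩, rfl⟩; exact ⟨hcX, c, hc, rfl⟩
      · rintro ⟨hy, c, hc, rfl⟩; exact ⟨c, ⟨hc, hy⟩, rfl⟩
    have hcards : A'.card + B'.card = X₁.card + X₂.card := by
      rw [hB'card, hA', Finset.card_union_add_card_inter, hTcard]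
    have hsub : A' + B' ⊆ X₁ + X₂ := by
      intro z hz
      rw [Finset.mem_add] at hz
      obtain ⟨x, hx, y, hy, rfl⟩ := hz
      rw [hB', Finset.mem_filter] at hy
      rcases Finset.mem_union.1 hx with hx | hx
      · exact Finset.add_mem_add hx hy.1
      · rw [hT, Finset.mem_image] at hx
        obtain ⟨c, hc, rfl⟩ := hx
        have : (y + e) + c = c + e + y := by abel
        rw [← this]
        exact Finset.add_mem_add hy.2 hc
    have hB'ne : B'.Nonempty := ⟨x₂, by
      rw [hB', Finset.mem_filter]
      refine ⟨hx₂, ?_⟩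
      have : x₂ + e = x₁ := by rw [he]; abel
      rw [this]; exact hx₁⟩
    have hB'lt : B'.card < X₂.card := by
      apply Finset.card_lt_card
      constructor
      · exact Finset.filter_subset _ _
      · intro hsub'
        have := hsub' hb
        rw [hB', Finset.mem_filter] at this
        exact hbe this.2
    have hA'ne : A'.Nonempty := h₁.mono Finset.subset_union_left
    have hrec := ih B'.card (hn ▸ hB'lt) A' B' rfl hA'ne hB'ne
      (fun H hH a => by
        obtain ⟨h, hhH, hh⟩ := hcoset H hH a
        exact ⟨h, hhH, fun hmem => hh (hsub hmem)⟩)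
    calc X₁.card + X₂.card - 1 = A'.card + B'.card - 1 := by rw [hcards]
      _ ≤ (A' + B').card := hrec
      _ ≤ (X₁ + X₂).card := Finset.card_le_card hsub
  · push_neg at hcase
    -- every translate stays: X₁ is stable under X₂ - X₂
    have hstab : ∀ b ∈ X₂, ∀ b' ∈ X₂, ∀ x ∈ X₁, x + (b - b') ∈ X₁ := by
      intro b hb b' hb' x hx
      have := hcase x hx b' hb' b hb
      have heq : b + (x - b') = x + (b - b') := by abel
      rwa [heq] at this
    rcases eq_or_lt_of_le (Finset.one_le_card.mpr h₂) with hone | htwo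
    · -- |X₂| = 1
      obtain ⟨c, hc⟩ := Finset.card_eq_one.mp hone.symm
      subst hc
      rw [Finset.add_singleton, Finset.card_vadd_finset]
      simp
    · -- |X₂| ≥ 2 : contradiction with hcoset
      exfalso
      obtain ⟨b, hb, b', hb', hne⟩ := Finset.one_lt_card.mp htwo
      set H := AddSubgroup.closure ((X₂ : Set A) - (X₂ : Set A)) with hH
      have hstable : ∀ h ∈ H, ∀ x ∈ X₁, x + h ∈ X₁ := by
        intro h hh
        induction hh using AddSubgroup.closure_induction with
        | mem y hy =>
          obtain ⟨u, hu, v, hv, rfl⟩ := hy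
          exact hstab u hu v hv
        | zero => intro x hx; simpa using hx
        | add y z _ _ hy hz =>
          intro x hx
          rw [← add_assoc]
          exact hz _ (hy x hx)
        | neg y _ hy =>
          intro x hx
          have himg : X₁.image (· + y) = X₁ := by
            apply Finset.eq_of_subset_of_card_le
            · intro z hz
              obtain ⟨w, hw, rfl⟩ := Finset.mem_image.1 hz
              exact hy w hw
            · rw [Finset.card_image_of_injective _ (add_left_injective y)]
          have : x ∈ X₁.image (· + y) := by rw [himg]; exact hx
          obtain ⟨w, hw, rfl⟩ := Finset.mem_image.1 this
          simpa using hw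
      have hHne : H ≠ ⊥ := by
        intro hbot
        have hmem : b - b' ∈ H := AddSubgroup.subset_closure ⟨b, hb, b', hb', rfl⟩
        rw [hbot, AddSubgroup.mem_bot, sub_eq_zero] at hmem
        exact hne hmem
      obtain ⟨x₁, hx₁⟩ := h₁
      obtain ⟨h, hhH, hh⟩ := hcoset H hHne (x₁ + b)
      apply hh
      have : x₁ + b + h = (x₁ + h) + b := by abel
      rw [this]
      exact Finset.add_mem_add (hstable h hhH x₁ hx₁) hb

/-- Kneser-type inequality: if the sumset `X₁ + X₂` of finite nonempty subsets of an
abelian group contains no coset of a nontrivial subgroup, then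
`|X₁ + X₂| ≥ |X₁| + |X₂| − 1`. -/
theorem stmt1 {A : Type*} [AddCommGroup A] [DecidableEq A]
    (X₁ X₂ : Finset A) (h₁ : X₁.Nonempty) (h₂ : X₂.Nonempty)
    (hcoset : ∀ (H : AddSubgroup A), H ≠ ⊥ → ∀ a : A,
      ¬ ((fun h => a + h) '' (H : Set A) ⊆ (↑(X₁ + X₂) : Set A))) :
    X₁.card + X₂.card - 1 ≤ (X₁ + X₂).card := by
  apply aux_stmt1 X₂.card X₁ X₂ rfl h₁ h₂
  intro H hH a
  by_contra hcon
  push_neg at hcon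
  apply hcoset H hH a
  rintro z ⟨h, hhH, rfl⟩
  exact_mod_cast hcon h hhH
end

section
/- Let q = e^{πi/ℓ} with ℓ ≥ 3 an integer, and let n be a nonzero integer with n ≠ −1. Assume the constraints ℓ ≥ n + 2 when n > 0 and ℓ ≥ 4 − n when n < 0. Then the three-element set {q, −q⁻¹, q⁻ⁿ} fails the no-cycle property (i.e., contains a coset u·⟨ζ_m⟩ of a nontrivial finite cyclic subgroup of ℂˣ) if and only if n = 1 or (n, ℓ) = (3, 6). -/
open Complex

/-- A finite set `X ⊆ ℂˣ` fails the no-cycle property if it contains a coset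
`u·⟨ζ⟩` of a nontrivial finite cyclic subgroup of `ℂˣ`. -/
def FailsNoCycle (X : Set ℂ) : Prop :=
  ∃ (m : ℕ) (ζ u : ℂ), 2 ≤ m ∧ IsPrimitiveRoot ζ m ∧ u ≠ 0 ∧ ∀ k : ℕ, u * ζ ^ k ∈ X

/-- For `q = e^{πi/ℓ}`, `ℓ ≥ 3`, `n ≠ 0, −1`, with the admissibility constraints,
the set `{q, −q⁻¹, q⁻ⁿ}` fails the no-cycle property iff `n = 1` or `(n,ℓ) = (3,6)`. -/
theorem stmt4 (ℓ : ℕ) (hℓ : 3 ≤ ℓ) (n : ℤ) (hn0 : n ≠ 0) (hn1 : n ≠ -1)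
    (hpos : 0 < n → n + 2 ≤ (ℓ : ℤ)) (hneg : n < 0 → 4 - n ≤ (ℓ : ℤ))
    (q : ℂ) (hq : q = Complex.exp (Real.pi * Complex.I / ℓ)) :
    FailsNoCycle ({q, -q⁻¹, q ^ (-n)} : Set ℂ) ↔ n = 1 ∨ (n = 3 ∧ ℓ = 6) := by
  classical
  have hlne : (ℓ : ℂ) ≠ 0 := Nat.cast_ne_zero.mpr (by omega)
  have hq0 : q ≠ 0 := by rw [hq]; exact Complex.exp_ne_zero _
  have hprim : IsPrimitiveRoot q (2 * ℓ) := by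
    have h := Complex.isPrimitiveRoot_exp (2 * ℓ) (by omega)
    have : Complex.exp (2 * Real.pi * Complex.I / (2 * ℓ : ℕ)) =
        Complex.exp (Real.pi * Complex.I / ℓ) := by
      congr 1
      push_cast
      field_simp
    rwa [this, ← hq] at h
  have hqln : q ^ ℓ = -1 := by
    rw [hq, ← Complex.exp_nat_mul]
    have : (ℓ : ℂ) * (Real.pi * Complex.I / ℓ) = Real.pi * Complex.I := by
      field_simp
    rw [this, Complex.exp_pi_mul_I]
  have hql : q ^ (ℓ : ℤ) = -1 := by rw [zpow_natCast]; exact hqln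
  have hdvd : ∀ a b : ℤ, q ^ a = q ^ b → (2 * (ℓ : ℤ)) ∣ (a - b) := by
    intro a b h
    have h1 : q ^ (a - b) = 1 := by
      rw [zpow_sub₀ hq0, h, div_self (zpow_ne_zero _ hq0)]
    have h2 := (hprim.zpow_eq_one_iff_dvd _).mp h1
    have : ((2 * ℓ : ℕ) : ℤ) = 2 * (ℓ : ℤ) := by push_cast; ring
    rwa [this] at h2
  have hneq : ∀ a b : ℤ, q ^ a = -q ^ b → (2 * (ℓ : ℤ)) ∣ (a - b - ℓ) := by
    intro a b h
    have h1 : q ^ a = q ^ ((ℓ : ℤ) + b) := by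
      rw [zpow_add₀ hq0, hql, neg_one_mul, ← h]
    have h2 := hdvd _ _ h1
    have : a - ((ℓ : ℤ) + b) = a - b - ℓ := by ring
    rwa [this] at h2
  have hz : ∀ x : ℤ, (2 * (ℓ : ℤ)) ∣ x → -(2 * (ℓ : ℤ)) < x → x < 2 * (ℓ : ℤ) → x = 0 := by
    intro x h1 h2 h3
    exact Int.eq_zero_of_abs_lt_dvd h1 (abs_lt.mpr ⟨h2, h3⟩)
  have hcon : (0 < n ∧ n + 2 ≤ (ℓ : ℤ)) ∨ (n < 0 ∧ 4 - n ≤ (ℓ : ℤ)) := by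
    rcases lt_or_gt_of_ne hn0 with h | h
    · exact Or.inr ⟨h, hneg h⟩
    · exact Or.inl ⟨h, hpos h⟩
  constructor
  · rintro ⟨m, ζ, u, hm, hζ, hu, hmem⟩
    simp only [Set.mem_insert_iff, Set.mem_singleton_iff] at hmem
    -- a bound on the size of the set
    have hS3 : ({q, -q⁻¹, q ^ (-n)} : Finset ℂ).card ≤ 3 := by
      have h1 := Finset.card_insert_le q ({-q⁻¹, q ^ (-n)} : Finset ℂ)
      have h2 := Finset.card_insert_le (-q⁻¹) ({q ^ (-n)} : Finset ℂ)
      have h3 : ({q ^ (-n)} : Finset ℂ).card = 1 := Finset.card_singleton _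
      omega
    have hSX : ∀ k : ℕ, u * ζ ^ k ∈ ({q, -q⁻¹, q ^ (-n)} : Finset ℂ) := by
      intro k
      have := hmem k
      simp only [Finset.mem_insert, Finset.mem_singleton]
      tauto
    have hdistinct : ∀ i j : ℕ, i < m → j < m → u * ζ ^ i = u * ζ ^ j → i = j := by
      intro i j hi hj h
      exact hζ.pow_inj hi hj (mul_left_cancel₀ hu h)
    match m, hm with
    | 2, _ =>
      -- ζ = -1
      have hζ1 : ζ = -1 := hζ.eq_neg_one_of_two_right
      have h0 := hmem 0
      have h1 := hmem 1
      rw [pow_zero, mul_one] at h0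
      rw [pow_one, hζ1, mul_neg_one] at h1
      -- h0 : u ∈ X, h1 : -u ∈ X
      rcases h0 with h0 | h0 | h0 <;> rcases h1 with h1 | h1 | h1
      · -- -q = q
        exfalso
        have e : q ^ (1 : ℤ) = -q ^ (1 : ℤ) := by
          rw [zpow_one]; rw [h0] at h1; linear_combination -h1
        have := hz _ (hneq 1 1 e) (by omega) (by omega)
        omega
      · -- -q = -q⁻¹
        exfalso
        have e : q ^ (1 : ℤ) = q ^ (-1 : ℤ) := by
          rw [zpow_one, zpow_neg_one]; rw [h0] at h1; linear_combination -h1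
        have := hz _ (hdvd 1 (-1) e) (by omega) (by omega)
        omega
      · -- -q = q^{-n}
        exfalso
        have e : q ^ (-n) = -q ^ (1 : ℤ) := by
          rw [zpow_one]; rw [h0] at h1; linear_combination -h1
        have := hz _ (hneq (-n) 1 e) (by omega) (by omega)
        omega
      · -- q⁻¹ = q
        exfalso
        have e : q ^ (1 : ℤ) = q ^ (-1 : ℤ) := by
          rw [zpow_one, zpow_neg_one]; rw [h0] at h1; linear_combination -h1
        have := hz _ (hdvd 1 (-1) e) (by omega) (by omega)
        omega
      · -- q⁻¹ = -q⁻¹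
        exfalso
        have e : q ^ (-1 : ℤ) = -q ^ (-1 : ℤ) := by
          rw [zpow_neg_one]; rw [h0] at h1; linear_combination h1
        have := hz _ (hneq (-1) (-1) e) (by omega) (by omega)
        omega
      · -- q⁻¹ = q^{-n}
        left
        have e : q ^ (-n) = q ^ (-1 : ℤ) := by
          rw [zpow_neg_one]; rw [h0] at h1; linear_combination -h1
        have := hz _ (hdvd (-n) (-1) e) (by omega) (by omega)
        omega
      · -- -q^{-n} = q
        exfalso
        have e : q ^ (-n) = -q ^ (1 : ℤ) := by
          rw [zpow_one]; rw [h0] at h1; linear_combination -h1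
        have := hz _ (hneq (-n) 1 e) (by omega) (by omega)
        omega
      · -- -q^{-n} = -q⁻¹
        left
        have e : q ^ (-n) = q ^ (-1 : ℤ) := by
          rw [zpow_neg_one]; rw [h0] at h1; linear_combination -h1
        have := hz _ (hdvd (-n) (-1) e) (by omega) (by omega)
        omega
      · -- -q^{-n} = q^{-n}
        exfalso
        have e : q ^ (-n) = -q ^ (-n) := by
          rw [h0] at h1; linear_combination -h1
        have := hz _ (hneq (-n) (-n) e) (by omega) (by omega)
        omega
    | 3, _ =>
      right
      have h3 : ζ ^ 3 = 1 := hζ.pow_eq_one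
      -- the coset {u, uζ, uζ²} has 3 elements and is contained in X
      set T : Finset ℂ := {u * ζ ^ 0, u * ζ ^ 1, u * ζ ^ 2} with hT
      have hTS : T ⊆ ({q, -q⁻¹, q ^ (-n)} : Finset ℂ) := by
        rw [hT]
        refine Finset.insert_subset (hSX 0) (Finset.insert_subset (hSX 1)
          (Finset.singleton_subset_iff.mpr (hSX 2)))
      have hTcard : T.card = 3 := by
        rw [hT, Finset.card_insert_of_notMem, Finset.card_insert_of_notMem,
          Finset.card_singleton]
        · simp only [Finset.mem_singleton]
          intro h
          exact absurd (hdistinct 1 2 (by omega) (by omega) h) (by omega)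
        · simp only [Finset.mem_insert, Finset.mem_singleton]
          push_neg
          constructor
          · intro h; exact absurd (hdistinct 0 1 (by omega) (by omega) h) (by omega)
          · intro h; exact absurd (hdistinct 0 2 (by omega) (by omega) h) (by omega)
      have hST : T = ({q, -q⁻¹, q ^ (-n)} : Finset ℂ) :=
        Finset.eq_of_subset_of_card_le hTS (by omega)
      have cube : ∀ x ∈ T, x ^ 3 = u ^ 3 := by
        intro x hx
        rw [hT] at hx
        simp only [Finset.mem_insert, Finset.mem_singleton] at hx
        rcases hx with rfl | rfl | rfl
        · rw [pow_zero, mul_one]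
        · rw [pow_one, mul_pow, h3, mul_one]
        · rw [mul_pow, ← pow_mul, show 2 * 3 = 3 * 2 by rfl, pow_mul, h3, one_pow, mul_one]
      have e1 : q ^ 3 = u ^ 3 := cube q (by rw [hST]; exact Finset.mem_insert_self _ _)
      have e2 : (-q⁻¹) ^ 3 = u ^ 3 := cube _ (by rw [hST]; simp)
      have e3 : (q ^ (-n)) ^ 3 = u ^ 3 := cube _ (by rw [hST]; simp)
      -- ℓ = 6
      have e' : q ^ (3 : ℤ) = -q ^ (-3 : ℤ) := by
        rw [show (3 : ℤ) = ((3 : ℕ) : ℤ) from rfl, zpow_neg, zpow_natCast, ← inv_pow]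
        linear_combination e1 - e2
      have hl6 : ℓ = 6 := by
        have := hz _ (hneq 3 (-3) e') (by omega) (by omega)
        omega
      subst hl6
      refine ⟨?_, rfl⟩
      have e3' : q ^ ((-n) * 3) = q ^ (3 : ℤ) := by
        rw [zpow_mul, show (3 : ℤ) = ((3 : ℕ) : ℤ) from rfl, zpow_natCast, zpow_natCast]
        linear_combination e3 - e1
      obtain ⟨k, hk⟩ := hdvd ((-n) * 3) 3 e3'
      omega
    | (m + 4), _ =>
      exfalso
      set T4 : Finset ℂ := {u * ζ ^ 0, u * ζ ^ 1, u * ζ ^ 2, u * ζ ^ 3} with hT4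
      have hT4S : T4 ⊆ ({q, -q⁻¹, q ^ (-n)} : Finset ℂ) := by
        rw [hT4]
        refine Finset.insert_subset (hSX 0) (Finset.insert_subset (hSX 1)
          (Finset.insert_subset (hSX 2) (Finset.singleton_subset_iff.mpr (hSX 3))))
      have hT4card : T4.card = 4 := by
        rw [hT4, Finset.card_insert_of_notMem, Finset.card_insert_of_notMem,
          Finset.card_insert_of_notMem, Finset.card_singleton]
        · simp only [Finset.mem_singleton]
          intro h
          exact absurd (hdistinct 2 3 (by omega) (by omega) h) (by omega)
        · simp only [Finset.mem_insert, Finset.mem_singleton]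
          push_neg
          exact ⟨fun h => absurd (hdistinct 1 2 (by omega) (by omega) h) (by omega),
            fun h => absurd (hdistinct 1 3 (by omega) (by omega) h) (by omega)⟩
        · simp only [Finset.mem_insert, Finset.mem_singleton]
          push_neg
          exact ⟨fun h => absurd (hdistinct 0 1 (by omega) (by omega) h) (by omega),
            fun h => absurd (hdistinct 0 2 (by omega) (by omega) h) (by omega),
            fun h => absurd (hdistinct 0 3 (by omega) (by omega) h) (by omega)⟩
      have := Finset.card_le_card hT4S
      omega
  · rintro (rfl | ⟨rfl, rfl⟩)
    · -- n = 1 : take m = 2, ζ = -1, u = q⁻¹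
      refine ⟨2, -1, q⁻¹, le_refl 2, IsPrimitiveRoot.neg_one 0 two_ne_zero.symm,
        inv_ne_zero hq0, ?_⟩
      intro k
      simp only [Set.mem_insert_iff, Set.mem_singleton_iff]
      rcases Nat.even_or_odd k with he | ho
      · rw [he.neg_one_pow, mul_one]
        right; right
        rw [zpow_neg, zpow_one]
      · rw [ho.neg_one_pow, mul_neg_one]
        right; left
        rfl
    · -- (n, ℓ) = (3, 6) : take m = 3, ζ = q⁴, u = q
      have h12 : q ^ 12 = 1 := by
        have := hprim.pow_eq_one
        norm_num at this
        exact this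
      have h6 : q ^ 6 = -1 := hqln
      refine ⟨3, q ^ 4, q, by norm_num, hprim.pow (by norm_num) (by norm_num), hq0, ?_⟩
      intro k
      have hk4 : 4 * k = 12 * (k / 3) + 4 * (k % 3) := by omega
      have hpow : (q ^ 4) ^ k = q ^ (4 * (k % 3)) := by
        rw [← pow_mul, hk4, pow_add, pow_mul, h12, one_pow, one_mul]
      rw [hpow]
      simp only [Set.mem_insert_iff, Set.mem_singleton_iff]
      have h3 : k % 3 = 0 ∨ k % 3 = 1 ∨ k % 3 = 2 := by omega
      rcases h3 with h | h | h <;> rw [h]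
      · left; rw [mul_comm, pow_zero, one_mul]
      · right; left
        have : -q⁻¹ = q * q ^ (4 * 1) := by
          field_simp
          linear_combination -h6
        rw [this]
      · right; right
        rw [show -(3 : ℤ) = -((3 : ℕ) : ℤ) from rfl, zpow_neg, zpow_natCast]
        rw [inv_eq_one_div, eq_div_iff (pow_ne_zero _ hq0)]
        linear_combination h12
end

section
/- Let q = e^{πi/ℓ} with ℓ ≥ 3 an integer and let n be an integer satisfying the admissibility constraints (ℓ ≥ n + 2 for n > 0, ℓ ≥ 4 − n for n < 0). The three numbers q, −q⁻¹, q⁻ⁿ are (in some order) in geometric progression if and only if n ∈ {3, ℓ−3, ℓ/2, −ℓ/2}. -/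
/-- For `q = e^{πi/ℓ}` with the admissibility constraints, the three numbers
`q, −q⁻¹, q⁻ⁿ` are in geometric progression (in some order) iff
`n ∈ {3, ℓ−3, ℓ/2, −ℓ/2}`. -/
theorem stmt5 (ℓ : ℕ) (hℓ : 3 ≤ ℓ) (n : ℤ)
    (hpos : 0 < n → n + 2 ≤ (ℓ : ℤ)) (hneg : n < 0 → 4 - n ≤ (ℓ : ℤ))
    (q : ℂ) (hq : q = Complex.exp (Real.pi * Complex.I / ℓ)) :
    (q * (-q⁻¹) = (q ^ (-n)) ^ 2 ∨ q * q ^ (-n) = (-q⁻¹) ^ 2 ∨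
        (-q⁻¹) * q ^ (-n) = q ^ 2) ↔
      (n = 3 ∨ n = (ℓ : ℤ) - 3 ∨ 2 * n = (ℓ : ℤ) ∨ 2 * n = -(ℓ : ℤ)) := by
  have hl0 : (ℓ:ℂ) ≠ 0 := by exact_mod_cast (by omega : ℓ ≠ 0)
  have hq0 : q ≠ 0 := by rw [hq]; exact Complex.exp_ne_zero _
  have hprim : IsPrimitiveRoot q (2 * ℓ) := by
    have := Complex.isPrimitiveRoot_exp (2 * ℓ) (by omega)
    convert this using 2
    rw [hq]
    congr 1
    push_cast
    field_simp
  have hql : q ^ (ℓ:ℤ) = -1 := by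
    rw [hq, ← Complex.exp_int_mul]
    rw [show ((ℓ:ℤ):ℂ) * (Real.pi * Complex.I / ℓ) = Real.pi * Complex.I by
      push_cast; field_simp]
    exact Complex.exp_pi_mul_I
  have hpe : ∀ a b : ℤ, (q ^ a = q ^ b ↔ (2 * (ℓ:ℤ)) ∣ (a - b)) := by
    intro a b
    rw [show (2 * (ℓ:ℤ)) = ((2 * ℓ : ℕ) : ℤ) by push_cast; ring,
      ← hprim.zpow_eq_one_iff_dvd]
    constructor
    · intro h
      rw [sub_eq_add_neg, zpow_add₀ hq0, h, zpow_neg, mul_inv_cancel₀ (zpow_ne_zero _ hq0)]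
    · intro h
      have := congrArg (· * q ^ b) h
      simpa [sub_eq_add_neg, zpow_add₀ hq0, zpow_neg, mul_assoc,
        inv_mul_cancel₀ (zpow_ne_zero _ hq0)] using this
  have e1 : (q * (-q⁻¹) = (q ^ (-n)) ^ 2) ↔ q ^ (-2*n) = q ^ (ℓ:ℤ) := by
    rw [hql]
    rw [show q * (-q⁻¹) = -(q * q⁻¹) by ring, mul_inv_cancel₀ hq0]
    rw [show (q ^ (-n)) ^ 2 = q ^ (-2*n) by
      rw [← zpow_natCast (q ^ (-n)) 2, ← zpow_mul]; ring_nf]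
    exact eq_comm
  have e2 : (q * q ^ (-n) = (-q⁻¹) ^ 2) ↔ q ^ (1-n) = q ^ (-2:ℤ) := by
    rw [show q * q ^ (-n) = q ^ (1-n) by
      rw [sub_eq_add_neg, zpow_add₀ hq0, zpow_one]]
    rw [show (-q⁻¹) ^ 2 = q ^ (-2:ℤ) by
      rw [neg_sq, pow_two, zpow_neg, zpow_two, mul_inv]]
  have e3 : ((-q⁻¹) * q ^ (-n) = q ^ 2) ↔ q ^ (-(n+1)) = q ^ ((ℓ:ℤ) + 2) := by
    rw [show (-q⁻¹) * q ^ (-n) = -(q ^ (-(n+1))) by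
      rw [neg_add, zpow_add₀ hq0, zpow_neg, zpow_neg, zpow_one]; ring]
    rw [zpow_add₀ hq0, hql]
    rw [show q ^ (2:ℤ) = q ^ 2 by rw [← zpow_natCast q 2]; norm_num]
    constructor
    · intro h; rw [← h]; ring
    · intro h; rw [h]; ring
  rw [e1, e2, e3, hpe, hpe, hpe]
  have hL : 3 ≤ (ℓ:ℤ) := by exact_mod_cast hℓ
  constructor
  · rintro (⟨k, hk⟩ | ⟨k, hk⟩ | ⟨k, hk⟩)
    · -- -2n - ℓ = 2ℓk
      have hk0 : k = 0 ∨ k = -1 := by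
        by_contra hc
        push_neg at hc
        have h1 : 1 ≤ k ∨ k ≤ -2 := by omega
        rcases lt_trichotomy n 0 with h | h | h
        · have := hneg h
          rcases h1 with h1 | h1 <;> nlinarith
        · rcases h1 with h1 | h1 <;> nlinarith
        · have := hpos h
          rcases h1 with h1 | h1 <;> nlinarith
      rcases hk0 with rfl | rfl
      · right; right; right; linarith
      · right; right; left; linarith
    · -- 3 - n = 2ℓk
      have hk0 : k = 0 := by
        by_contra hc
        have h1 : 1 ≤ k ∨ k ≤ -1 := by omega
        rcases lt_trichotomy n 0 with h | h | h
        · have := hneg h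
          rcases h1 with h1 | h1 <;> nlinarith
        · rcases h1 with h1 | h1 <;> nlinarith
        · have := hpos h
          rcases h1 with h1 | h1 <;> nlinarith
      subst hk0
      left; linarith
    · -- -(n+1) - (ℓ+2) = 2ℓk
      have hk0 : k = -1 := by
        by_contra hc
        have h1 : 0 ≤ k ∨ k ≤ -2 := by omega
        rcases lt_trichotomy n 0 with h | h | h
        · have := hneg h
          rcases h1 with h1 | h1 <;> nlinarith
        · rcases h1 with h1 | h1 <;> nlinarith
        · have := hpos h
          rcases h1 with h1 | h1 <;> nlinarith
      subst hk0
      right; left; linarith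
  · rintro (rfl | rfl | h | h)
    · exact Or.inr (Or.inl ⟨0, by ring⟩)
    · exact Or.inr (Or.inr ⟨-1, by ring⟩)
    · exact Or.inl ⟨-1, by linarith⟩
    · exact Or.inl ⟨0, by linarith⟩
end

section
/- Let n ≥ 5 and let t ∈ SU(n) have at least four distinct eigenvalues λ₁, λ₂, λ₃, λ₄. Then for every i with 1 ≤ i ≤ n − 1 and i ≤ n − 3, the i-th exterior power representation Λⁱ(ℂⁿ) of SU(n) applied to t has at least four distinct eigenvalues. -/
/-- If `t ∈ SU(n)`, `n ≥ 5`, has (at least) four distinct eigenvalues, then for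
`1 ≤ i ≤ n−1` with `i ≤ n−3` the spectrum of `Λⁱ(t)` (the set of products of the
eigenvalues of `t` over `i`-element index sets) has at least four elements. -/
theorem stmt8 (n : ℕ) (hn : 5 ≤ n) (lam : Fin n → ℂ)
    (habs : ∀ s, ‖lam s‖ = 1) (hdet : ∏ s, lam s = 1)
    (a b c d : Fin n)
    (hab : lam a ≠ lam b) (hac : lam a ≠ lam c) (had : lam a ≠ lam d)
    (hbc : lam b ≠ lam c) (hbd : lam b ≠ lam d) (hcd : lam c ≠ lam d)
    (i : ℕ) (hi1 : 1 ≤ i) (hi2 : i ≤ n - 1) (hi3 : i ≤ n - 3) :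
    4 ≤ {z : ℂ | ∃ S : Finset (Fin n), S.card = i ∧ z = ∏ s ∈ S, lam s}.ncard := by
  have hne : ∀ s, lam s ≠ 0 := by
    intro s h
    have := habs s
    rw [h] at this
    simp at this
  -- indices are pairwise distinct
  have hab' : a ≠ b := fun h => hab (by rw [h])
  have hac' : a ≠ c := fun h => hac (by rw [h])
  have had' : a ≠ d := fun h => had (by rw [h])
  have hbc' : b ≠ c := fun h => hbc (by rw [h])
  have hbd' : b ≠ d := fun h => hbd (by rw [h])
  have hcd' : c ≠ d := fun h => hcd (by rw [h])
  set U : Finset (Fin n) := ({a, b, c, d} : Finset (Fin n))ᶜ with hU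
  have hcard4 : ({a, b, c, d} : Finset (Fin n)).card = 4 := by
    rw [Finset.card_insert_of_notMem (by simp [hab', hac', had']),
      Finset.card_insert_of_notMem (by simp [hbc', hbd']),
      Finset.card_insert_of_notMem (by simp [hcd']), Finset.card_singleton]
  have hUcard : U.card = n - 4 := by
    rw [hU, Finset.card_compl, hcard4]
    simp
  obtain ⟨T, hTU, hTcard⟩ := Finset.exists_subset_card_eq (s := U) (n := i - 1) (by omega)
  have hP : (∏ s ∈ T, lam s) ≠ 0 := Finset.prod_ne_zero_iff.mpr fun s _ => hne s
  have hmem : ∀ x ∈ ({a, b, c, d} : Finset (Fin n)),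
      lam x * ∏ s ∈ T, lam s ∈
        {z : ℂ | ∃ S : Finset (Fin n), S.card = i ∧ z = ∏ s ∈ S, lam s} := by
    intro x hx
    have hxT : x ∉ T := by
      intro hxT
      have := hTU hxT
      rw [hU, Finset.mem_compl] at this
      exact this hx
    exact ⟨insert x T, by rw [Finset.card_insert_of_notMem hxT, hTcard]; omega,
      (Finset.prod_insert hxT).symm⟩
  set P := ∏ s ∈ T, lam s
  have hsub : (↑({lam a * P, lam b * P, lam c * P, lam d * P} : Finset ℂ) : Set ℂ) ⊆
      {z : ℂ | ∃ S : Finset (Fin n), S.card = i ∧ z = ∏ s ∈ S, lam s} := by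
    intro z hz
    simp only [Finset.coe_insert, Finset.coe_singleton, Set.mem_insert_iff,
      Set.mem_singleton_iff] at hz
    rcases hz with h | h | h | h <;> subst h
    · exact hmem a (by simp)
    · exact hmem b (by simp)
    · exact hmem c (by simp)
    · exact hmem d (by simp)
  have hfin : {z : ℂ | ∃ S : Finset (Fin n), S.card = i ∧ z = ∏ s ∈ S, lam s}.Finite := by
    apply Set.Finite.subset (Set.finite_range (fun S : Finset (Fin n) => ∏ s ∈ S, lam s))
    rintro z ⟨S, _, hz⟩
    exact ⟨S, hz.symm⟩
  have hmul : ∀ x y : Fin n, lam x ≠ lam y → lam x * P ≠ lam y * P := by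
    intro x y h hxy
    exact h (mul_right_cancel₀ hP hxy)
  have hcard' : ({lam a * P, lam b * P, lam c * P, lam d * P} : Finset ℂ).card = 4 := by
    rw [Finset.card_insert_of_notMem (by
        simp [hmul a b hab, hmul a c hac, hmul a d had]),
      Finset.card_insert_of_notMem (by simp [hmul b c hbc, hmul b d hbd]),
      Finset.card_insert_of_notMem (by simp [hmul c d hcd]), Finset.card_singleton]
  calc 4 = (↑({lam a * P, lam b * P, lam c * P, lam d * P} : Finset ℂ) : Set ℂ).ncard := by
        rw [Set.ncard_coe_finset, hcard']
    _ ≤ _ := Set.ncard_le_ncard hsub hfin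
end
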